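/- For every x ∈ ℝⁿ, ‖P_Cᵀ x‖² = Σ_{i=r+1}^{r+s} (Z̃_iᵀ x)²/(1−σ_i²) + Σ_{i=r+s+1}^{p} (Z̃_iᵀ x)²; in particular, ‖P_Cᵀ x‖ ≥ ‖Z̃_{(r+1):p}ᵀ x‖. -/

import Mathlib

open Matrix

noncomputable def specNorm {m n : Type*} [Fintype m] [Fintype n] [DecidableEq n]
    (A : Matrix m n ℝ) : ℝ :=
  ‖LinearMap.toContinuousLinearMap (Matrix.toEuclideanLin A)‖

noncomputable def vnorm {n : Type*} [Fintype n] (v : n → ℝ) : ℝ :=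
  Real.sqrt (∑ i, v i ^ 2)

/-!
With `M = (Z', W')` (the columns of `Z̃`, `W̃` beyond the `r`-th) and `D = Z'ᵀ W'`, the Gram
matrix is `Mᵀ M = [[1, D], [Dᵀ, 1]]` and `P_Cᵀ x = M (Mᵀ M)⁻¹ (Z'ᵀ x, 0)`, so
`‖P_Cᵀ x‖² = (Z'ᵀ x, 0)ᵀ (Mᵀ M)⁻¹ (Z'ᵀ x, 0) = (Z'ᵀ x)ᵀ (1 - D Dᵀ)⁻¹ (Z'ᵀ x)` by the Schur
complement. Rotating by the SVD makes `D` rectangular diagonal with entries `σ_i`, so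
`1 - D Dᵀ = diag (1 - σ_i²)`, and `0 < 1 - σ_i² ≤ 1` gives the lower bound.
-/

namespace Matrix

variable {R : Type*} [CommRing R] {k m n : Type*} [Fintype k] [Fintype m] [Fintype n]

theorem dotProduct_mulVec_self (A : Matrix k m R) (w : m → R) :
    (A *ᵥ w) ⬝ᵥ (A *ᵥ w) = w ⬝ᵥ ((Aᵀ * A) *ᵥ w) := by
  rw [dotProduct_mulVec, ← mulVec_transpose, ← mulVec_mulVec, dotProduct_comm]

variable [DecidableEq m] [DecidableEq n]

theorem fromBlocks_one_mulVec_sumElim_neg (D : Matrix m n R) (a : m → R) :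
    fromBlocks 1 D Dᵀ 1 *ᵥ Sum.elim a (-(Dᵀ *ᵥ a)) = Sum.elim ((1 - D * Dᵀ) *ᵥ a) 0 := by
  simp [fromBlocks_mulVec, sub_mulVec, mulVec_neg, mulVec_mulVec, ← sub_eq_add_neg]

theorem inv_fromBlocks_one_mulVec_sumElim_zero (D : Matrix m n R)
    (hS : IsUnit (1 - D * Dᵀ).det) (u : m → R) :
    (fromBlocks 1 D Dᵀ 1)⁻¹ *ᵥ Sum.elim u 0
      = Sum.elim ((1 - D * Dᵀ)⁻¹ *ᵥ u) (-(Dᵀ *ᵥ ((1 - D * Dᵀ)⁻¹ *ᵥ u))) := by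
  have hG : IsUnit (fromBlocks 1 D Dᵀ 1).det := by rwa [det_fromBlocks_one₂₂]
  let X := Sum.elim ((1 - D * Dᵀ)⁻¹ *ᵥ u) (-(Dᵀ *ᵥ ((1 - D * Dᵀ)⁻¹ *ᵥ u)))
  calc _ = (fromBlocks 1 D Dᵀ 1)⁻¹ *ᵥ (fromBlocks 1 D Dᵀ 1 *ᵥ X) := by
        rw [fromBlocks_one_mulVec_sumElim_neg, mulVec_mulVec, mul_nonsing_inv _ hS, one_mulVec]
    _ = X := by rw [mulVec_mulVec, nonsing_inv_mul _ hG, one_mulVec]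

/-- The projection onto the column space of `Z` along that of `W` (`P_C` of the paper). -/
noncomputable def obliqueProj (Z : Matrix k m R) (W : Matrix k n R) : Matrix k k R :=
  fromCols Z (0 : Matrix k n R) * ((fromCols Z W)ᵀ * fromCols Z W)⁻¹ * (fromCols Z W)ᵀ

theorem obliqueProj_transpose_mulVec_dotProduct_self (Z : Matrix k m R) (W : Matrix k n R)
    (hZ : Zᵀ * Z = 1) (hW : Wᵀ * W = 1) (hS : IsUnit (1 - (Zᵀ * W) * (Zᵀ * W)ᵀ).det)
    (x : k → R) :
    ((obliqueProj Z W)ᵀ *ᵥ x) ⬝ᵥ ((obliqueProj Z W)ᵀ *ᵥ x)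
      = ((1 - (Zᵀ * W) * (Zᵀ * W)ᵀ)⁻¹ *ᵥ (Zᵀ *ᵥ x)) ⬝ᵥ (Zᵀ *ᵥ x) := by
  set D := Zᵀ * W
  set M := fromCols Z W
  have hG : Mᵀ * M = fromBlocks 1 D Dᵀ 1 := by
    rw [transpose_fromCols, fromRows_mul_fromCols, hZ, hW, transpose_mul, transpose_transpose]
  have hGunit : IsUnit (Mᵀ * M).det := by rwa [hG, det_fromBlocks_one₂₂]
  have hv : (fromCols Z (0 : Matrix k n R))ᵀ *ᵥ x = Sum.elim (Zᵀ *ᵥ x) 0 := by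
    rw [transpose_fromCols, fromRows_mulVec, transpose_zero, zero_mulVec]
  have hPx : (obliqueProj Z W)ᵀ *ᵥ x = M *ᵥ ((Mᵀ * M)⁻¹ *ᵥ Sum.elim (Zᵀ *ᵥ x) 0) := by
    rw [obliqueProj, transpose_mul, transpose_mul, transpose_transpose, transpose_nonsing_inv,
      transpose_mul, transpose_transpose, ← mulVec_mulVec, ← mulVec_mulVec, hv]
  rw [hPx, dotProduct_mulVec_self, mulVec_mulVec, mul_nonsing_inv _ hGunit, one_mulVec, hG,
    inv_fromBlocks_one_mulVec_sumElim_zero D hS, sumElim_dotProduct_sumElim, dotProduct_zero,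
    add_zero]

theorem transpose_mul_self_mul_eq_one (Z : Matrix k m R) (U : Matrix m m R) (hZ : Zᵀ * Z = 1)
    (hU : Uᵀ * U = 1) : (Z * U)ᵀ * (Z * U) = 1 := by
  rw [transpose_mul, Matrix.mul_assoc, ← Matrix.mul_assoc Zᵀ, hZ, Matrix.one_mul, hU]

theorem transpose_mul_eq_of_svd {S : Matrix m n R} (Z : Matrix k m R) (W : Matrix k n R)
    (U : Matrix m m R) (V : Matrix n n R) (hU : Uᵀ * U = 1) (hV : Vᵀ * V = 1)
    (hSVD : Zᵀ * W = U * S * Vᵀ) : (Z * U)ᵀ * (W * V) = S := by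
  calc (Z * U)ᵀ * (W * V) = (Uᵀ * U) * S * (Vᵀ * V) := by
        simp only [transpose_mul, Matrix.mul_assoc, ← Matrix.mul_assoc Zᵀ, hSVD]
    _ = S := by rw [hU, hV, Matrix.one_mul, Matrix.mul_one]

def dropCols {p : ℕ} {α : Type*} (A : Matrix k (Fin p) α) (r : ℕ) : Matrix k (Fin (p - r)) α :=
  A.submatrix id fun j => ⟨r + j, by omega⟩

def rectDiag {α : Type*} [Zero α] {p q : ℕ} (d : ℕ → α) : Matrix (Fin p) (Fin q) α :=
  of fun i j => if (i : ℕ) = j then d i else 0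

theorem transpose_dropCols_mul_dropCols_apply {p q : ℕ} (A : Matrix k (Fin p) R)
    (B : Matrix k (Fin q) R) (r : ℕ) (i : Fin (p - r)) (j : Fin (q - r)) :
    ((dropCols A r)ᵀ * dropCols B r) i j = (Aᵀ * B) ⟨r + i, by omega⟩ ⟨r + j, by omega⟩ :=
  rfl

theorem rectDiag_mul_transpose {p q : ℕ} (d : ℕ → R) (hd : ∀ i, q ≤ i → d i = 0) :
    (rectDiag d : Matrix (Fin p) (Fin q) R) * (rectDiag d : Matrix (Fin p) (Fin q) R)ᵀ
      = diagonal fun i : Fin p => d i ^ 2 := by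
  ext i j
  simp only [mul_apply, rectDiag, transpose_apply, of_apply, diagonal_apply, Fin.ext_iff,
    ite_mul, zero_mul]
  by_cases hij : (i : ℕ) = j
  · by_cases hi : (i : ℕ) < q
    · rw [Finset.sum_eq_single ⟨i, hi⟩] <;> grind
    · simp [hd i (by omega)]
  · exact (Finset.sum_eq_zero fun l _ => by grind).trans (if_neg hij).symm

theorem transpose_dropCols_mul_dropCols_self {p : ℕ} (A : Matrix k (Fin p) R)
    (hA : Aᵀ * A = 1) (r : ℕ) : (dropCols A r)ᵀ * dropCols A r = 1 := by
  ext i j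
  rw [transpose_dropCols_mul_dropCols_apply, hA]
  simp [one_apply, Fin.ext_iff]

theorem transpose_dropCols_mul_dropCols_of_eq_rectDiag {p q : ℕ} (A : Matrix k (Fin p) R)
    (B : Matrix k (Fin q) R) {d : ℕ → R} (hAB : Aᵀ * B = rectDiag d) (r : ℕ) :
    (dropCols A r)ᵀ * dropCols B r = rectDiag fun i => d (r + i) := by
  ext i j
  rw [transpose_dropCols_mul_dropCols_apply, hAB]
  simp [rectDiag]

section Field

variable {K : Type*} [Field K]

theorem inv_diagonal_mulVec_dotProduct (c : m → K) (hc : ∀ i, c i ≠ 0)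
    (u : m → K) : ((diagonal c)⁻¹ *ᵥ u) ⬝ᵥ u = ∑ i, u i ^ 2 / c i := by
  have hinv : (diagonal c)⁻¹ = diagonal c⁻¹ :=
    inv_eq_left_inv (by simp [diagonal_mul_diagonal, hc])
  simp only [hinv, mulVec_diagonal, dotProduct]
  refine Finset.sum_congr rfl fun i _ => ?_
  simp only [Pi.inv_apply]
  ring

theorem obliqueProj_dropCols_transpose_mulVec_dotProduct_self {p q : ℕ}
    (Z : Matrix k (Fin p) K) (W : Matrix k (Fin q) K) (hZ : Zᵀ * Z = 1) (hW : Wᵀ * W = 1)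
    {d : ℕ → K} (hZW : Zᵀ * W = rectDiag d) (hdq : ∀ i, q ≤ i → d i = 0) (r : ℕ)
    (hd : ∀ i : Fin (p - r), d (r + i) ^ 2 ≠ 1) (x : k → K) :
    ((obliqueProj (dropCols Z r) (dropCols W r))ᵀ *ᵥ x)
        ⬝ᵥ ((obliqueProj (dropCols Z r) (dropCols W r))ᵀ *ᵥ x)
      = ∑ i : Fin (p - r), (Zᵀ *ᵥ x) ⟨r + i, by omega⟩ ^ 2 / (1 - d (r + i) ^ 2) := by
  have hc : ∀ i : Fin (p - r), 1 - d (r + i) ^ 2 ≠ 0 := fun i => sub_ne_zero.mpr (hd i).symm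
  have hS : 1 - (dropCols Z r)ᵀ * dropCols W r * ((dropCols Z r)ᵀ * dropCols W r)ᵀ
      = diagonal fun i : Fin (p - r) => 1 - d (r + i) ^ 2 := by
    rw [transpose_dropCols_mul_dropCols_of_eq_rectDiag Z W hZW,
      rectDiag_mul_transpose _ fun i hi => hdq _ (by omega), ← diagonal_one, diagonal_sub]
  rw [obliqueProj_transpose_mulVec_dotProduct_self _ _
      (transpose_dropCols_mul_dropCols_self Z hZ r) (transpose_dropCols_mul_dropCols_self W hW r),
      hS, inv_diagonal_mulVec_dotProduct _ hc]
  · rfl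
  · rw [hS, det_diagonal]
    exact isUnit_iff_ne_zero.mpr (Finset.prod_ne_zero_iff.mpr fun i _ => hc i)

end Field

end Matrix

theorem vnorm_sq {n : Type*} [Fintype n] (v : n → ℝ) : vnorm v ^ 2 = v ⬝ᵥ v := by
  rw [vnorm, Real.sq_sqrt (Finset.sum_nonneg fun i _ => sq_nonneg (v i))]
  simp only [dotProduct, sq]

theorem Finset.sum_Ico_eq_sum_fin {M : Type*} [AddCommMonoid M] (g : ℕ → M) (r p : ℕ) :
    ∑ i ∈ Ico r p, g i = ∑ i : Fin (p - r), g (r + i) := by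
  rw [sum_Ico_eq_sum_range, Fin.sum_univ_eq_sum_range (fun i => g (r + i))]

theorem stmt_4
    (n p K r s : ℕ) (hrp : r + s ≤ p) (hrK : r + s ≤ K)
    (Z : Matrix (Fin n) (Fin p) ℝ) (W : Matrix (Fin n) (Fin K) ℝ)
    (hZ : Zᵀ * Z = 1) (hW : Wᵀ * W = 1)
    (U : Matrix (Fin p) (Fin p) ℝ) (V : Matrix (Fin K) (Fin K) ℝ)
    (hU : Uᵀ * U = 1) (hV : Vᵀ * V = 1)
    (σ : ℕ → ℝ)
    (hσlt : σ r < 1)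
    (hσanti : ∀ i j, i ≤ j → σ j ≤ σ i)
    (hσpos : 0 < σ (r + s - 1))
    (hσzero : ∀ i, r + s ≤ i → σ i = 0)
    (hSVD : Zᵀ * W
      = U * (Matrix.of fun (i : Fin p) (j : Fin K) =>
          if (i : ℕ) = (j : ℕ) then σ (i : ℕ) else 0) * Vᵀ)
    (Zt : Matrix (Fin n) (Fin p) ℝ) (hZt : Zt = Z * U)
    (Wt : Matrix (Fin n) (Fin K) ℝ) (hWt : Wt = W * V)
    (M : Matrix (Fin n) (Fin (p - r) ⊕ Fin (K - r)) ℝ)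
    (hMl : ∀ (a : Fin n) (j : Fin (p - r)),
      M a (Sum.inl j) = Zt a ⟨r + j.1, by have := j.2; omega⟩)
    (hMr : ∀ (a : Fin n) (j : Fin (K - r)),
      M a (Sum.inr j) = Wt a ⟨r + j.1, by have := j.2; omega⟩)
    (PC : Matrix (Fin n) (Fin n) ℝ)
    (hPC : PC = (Matrix.of fun (a : Fin n) (j : Fin (p - r) ⊕ Fin (K - r)) =>
        Sum.elim (fun j' : Fin (p - r) => Zt a ⟨r + j'.1, by have := j'.2; omega⟩)
                 (fun _ : Fin (K - r) => (0 : ℝ)) j) * (Mᵀ * M)⁻¹ * Mᵀ)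
    :
    ∀ x : Fin n → ℝ,
      vnorm (PCᵀ.mulVec x) ^ 2
        = (∑ i ∈ (Finset.Ico r (r + s)).attach,
            ((fun a : Fin n => Zt a ⟨i.1, by have := (Finset.mem_Ico.mp i.2).2; omega⟩) ⬝ᵥ x) ^ 2
              / (1 - σ i.1 ^ 2))
          + ∑ i ∈ (Finset.Ico (r + s) p).attach,
              ((fun a : Fin n => Zt a ⟨i.1, (Finset.mem_Ico.mp i.2).2⟩) ⬝ᵥ x) ^ 2
      ∧ Real.sqrt (∑ i ∈ (Finset.Ico r p).attach,
            ((fun a : Fin n => Zt a ⟨i.1, (Finset.mem_Ico.mp i.2).2⟩) ⬝ᵥ x) ^ 2)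
          ≤ vnorm (PCᵀ.mulVec x) := by
  intro x
  have hσ : ∀ i, r ≤ i → 0 ≤ σ i ∧ σ i < 1 := fun i hi =>
    ⟨(le_or_gt (r + s) i).elim (fun h => (hσzero i h).ge)
      fun h => hσpos.le.trans (hσanti _ _ (by omega)), (hσanti r i hi).trans_lt hσlt⟩
  have hM : M = fromCols (dropCols Zt r) (dropCols Wt r) := by
    ext a (j | j)
    exacts [hMl a j, hMr a j]
  have hPC' : PC = obliqueProj (dropCols Zt r) (dropCols Wt r) := by rw [hPC, hM]; rfl
  obtain ⟨u, hu⟩ : ∃ u : ℕ → ℝ, ∀ i (h : i < p), u i = (fun a => Zt a ⟨i, h⟩) ⬝ᵥ x :=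
    ⟨fun i => if h : i < p then (fun a => Zt a ⟨i, h⟩) ⬝ᵥ x else 0, fun i h => dif_pos h⟩
  have hnorm : vnorm (PCᵀ *ᵥ x) ^ 2 = ∑ i ∈ Finset.Ico r p, u i ^ 2 / (1 - σ i ^ 2) := by
    subst hZt hWt
    rw [vnorm_sq, hPC', obliqueProj_dropCols_transpose_mulVec_dotProduct_self _ _
      (transpose_mul_self_mul_eq_one Z U hZ hU) (transpose_mul_self_mul_eq_one W V hW hV)
      (transpose_mul_eq_of_svd Z W U V hU hV hSVD) (fun i hi => hσzero i (by omega)) r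
      (fun i => (pow_lt_one₀ (hσ _ (by omega)).1 (hσ _ (by omega)).2 two_ne_zero).ne),
      Finset.sum_Ico_eq_sum_fin]
    refine Finset.sum_congr rfl fun i _ => ?_
    rw [hu _ (by omega)]
    rfl
  constructor
  · rw [hnorm, ← Finset.sum_Ico_consecutive _ (Nat.le_add_right r s) hrp,
      ← Finset.sum_attach (Finset.Ico r (r + s)), ← Finset.sum_attach (Finset.Ico (r + s) p)]
    congr 1 <;> refine Finset.sum_congr rfl fun i _ => ?_ <;> have := Finset.mem_Ico.mp i.2
    · rw [hu _ (by omega)]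
    · rw [hu _ (by omega), hσzero _ this.1]
      simp
  · refine (Real.sqrt_le_sqrt ?_).trans_eq (Real.sqrt_sq (Real.sqrt_nonneg _))
    rw [hnorm, ← Finset.sum_attach (Finset.Ico r p)]
    gcongr with i
    have hi := Finset.mem_Ico.mp i.2
    obtain ⟨hσ0, hσ1⟩ := hσ i hi.1
    rw [hu _ hi.2]
    exact le_div_self (sq_nonneg _) (by nlinarith) (by nlinarith)
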